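/- If f : ℝ³ → ℝ³ is C¹ with f'(u)v·v ≥ (-K + κ|u|^{r-1})|v|² for all u,v (K ≥ 0, κ > 0, r ≥ 1), then there exist constants C ≥ 0 and α > 0 such that for all u₁, u₂ ∈ ℝ³: (f(u₁) - f(u₂))·(u₁ - u₂) ≥ -C|u₁ - u₂|² + α(|u₁|^{r-1} + |u₂|^{r-1})|u₁ - u₂|². -/

import Mathlib

/-!
Along the segment `γ t = u₂ + t • (u₁ - u₂)` one has
`⟪f u₁ - f u₂, u₁ - u₂⟫ = ∫₀¹ ⟪f'(γ t) (u₁ - u₂), u₁ - u₂⟫ dt`, and the hypothesis applies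
pointwise in `t`. What remains is the weight `∫₀¹ ‖γ t‖^(r-1) dt`, which is at least
`(‖u₁‖^(r-1) + ‖u₂‖^(r-1)) / (8 * 2^(r-1))`: if `‖u₂‖ ≤ ‖u₁‖`, then `‖γ t‖ ≥ ‖u₁‖ / 2` on
`[3/4, 1]`, and the other case follows by running the segment backwards.
-/

open scoped InnerProductSpace

local notation "E" => EuclideanSpace ℝ (Fin 3)

section Segment

variable {F : Type*} [NormedAddCommGroup F] [NormedSpace ℝ F]

lemma half_norm_le_norm_add_smul_sub {u₁ u₂ : F} (hu : ‖u₂‖ ≤ ‖u₁‖) {t : ℝ}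
    (ht : t ∈ Set.Icc (3 / 4 : ℝ) 1) : ‖u₁‖ / 2 ≤ ‖u₂ + t • (u₁ - u₂)‖ := by
  obtain ⟨ht₀, ht₁⟩ := ht
  have hsplit : u₂ + t • (u₁ - u₂) = t • u₁ - (-(1 - t)) • u₂ := by module
  have htri := norm_sub_norm_le (t • u₁) ((-(1 - t)) • u₂)
  rw [← hsplit, norm_smul, norm_smul, Real.norm_of_nonneg (by linarith),
    norm_neg, Real.norm_of_nonneg (by linarith)] at htri
  nlinarith [norm_nonneg u₂]

lemma integral_comp_add_smul_sub_symm (g : F → ℝ) (u₁ u₂ : F) :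
    ∫ t in (0 : ℝ)..1, g (u₂ + t • (u₁ - u₂)) = ∫ t in (0 : ℝ)..1, g (u₁ + t • (u₂ - u₁)) := by
  have hflip : ∀ t : ℝ, u₂ + (1 - t) • (u₁ - u₂) = u₁ + t • (u₂ - u₁) := fun t => by module
  simpa only [hflip, sub_zero, sub_self] using
    (intervalIntegral.integral_comp_sub_left (a := 0) (b := 1)
      (fun t => g (u₂ + t • (u₁ - u₂))) (1 : ℝ)).symm

variable {p : ℝ}

lemma continuous_rpow_norm_add_smul_sub (hp : 0 ≤ p) (u₁ u₂ : F) :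
    Continuous fun t : ℝ => ‖u₂ + t • (u₁ - u₂)‖ ^ p :=
  (continuous_const.add (continuous_id.smul continuous_const)).norm.rpow_const
    fun _ => Or.inr hp

lemma rpow_norm_div_le_integral_rpow_norm_add_smul_sub_of_le (hp : 0 ≤ p) {u₁ u₂ : F}
    (hu : ‖u₂‖ ≤ ‖u₁‖) :
    ‖u₁‖ ^ p / (4 * 2 ^ p) ≤ ∫ t in (0 : ℝ)..1, ‖u₂ + t • (u₁ - u₂)‖ ^ p := by
  have hcont := continuous_rpow_norm_add_smul_sub hp u₁ u₂
  calc ‖u₁‖ ^ p / (4 * 2 ^ p) = ∫ _ in (3 / 4 : ℝ)..1, (‖u₁‖ / 2) ^ p := by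
        rw [intervalIntegral.integral_const, smul_eq_mul,
          Real.div_rpow (norm_nonneg _) zero_le_two]
        ring
    _ ≤ ∫ t in (3 / 4 : ℝ)..1, ‖u₂ + t • (u₁ - u₂)‖ ^ p :=
        intervalIntegral.integral_mono_on (by norm_num) intervalIntegrable_const
          (hcont.intervalIntegrable _ _) fun t ht =>
            Real.rpow_le_rpow (by positivity) (half_norm_le_norm_add_smul_sub hu ht) hp
    _ ≤ ∫ t in (0 : ℝ)..1, ‖u₂ + t • (u₁ - u₂)‖ ^ p :=
        intervalIntegral.integral_mono_interval (by norm_num) (by norm_num) le_rfl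
          (Filter.Eventually.of_forall fun _ => by positivity) (hcont.intervalIntegrable _ _)

lemma rpow_norm_add_div_le_integral_rpow_norm_add_smul_sub (hp : 0 ≤ p) (u₁ u₂ : F) :
    (‖u₁‖ ^ p + ‖u₂‖ ^ p) / (8 * 2 ^ p) ≤ ∫ t in (0 : ℝ)..1, ‖u₂ + t • (u₁ - u₂)‖ ^ p := by
  rcases le_total ‖u₂‖ ‖u₁‖ with hu | hu
  · have hpow := Real.rpow_le_rpow (norm_nonneg _) hu hp
    calc (‖u₁‖ ^ p + ‖u₂‖ ^ p) / (8 * 2 ^ p) ≤ ‖u₁‖ ^ p / (4 * 2 ^ p) := by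
          rw [div_le_div_iff₀ (by positivity) (by positivity)]
          nlinarith [Real.rpow_pos_of_pos (two_pos : (0 : ℝ) < 2) p]
      _ ≤ _ := rpow_norm_div_le_integral_rpow_norm_add_smul_sub_of_le hp hu
  · have hpow := Real.rpow_le_rpow (norm_nonneg _) hu hp
    calc (‖u₁‖ ^ p + ‖u₂‖ ^ p) / (8 * 2 ^ p) ≤ ‖u₂‖ ^ p / (4 * 2 ^ p) := by
          rw [div_le_div_iff₀ (by positivity) (by positivity)]
          nlinarith [Real.rpow_pos_of_pos (two_pos : (0 : ℝ) < 2) p]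
      _ ≤ _ := by
          rw [integral_comp_add_smul_sub_symm (‖·‖ ^ p)]
          exact rpow_norm_div_le_integral_rpow_norm_add_smul_sub_of_le hp hu

end Segment

section Taylor

variable {F G : Type*} [NormedAddCommGroup F] [NormedSpace ℝ F]
  [NormedAddCommGroup G] [InnerProductSpace ℝ G] {f : F → G}

lemma continuous_inner_fderiv_add_smul_sub (hf : ContDiff ℝ 1 f) (u₁ u₂ : F) (w : G) :
    Continuous fun t : ℝ => ⟪fderiv ℝ f (u₂ + t • (u₁ - u₂)) (u₁ - u₂), w⟫_ℝ :=
  (((hf.continuous_fderiv one_ne_zero).comp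
    (continuous_const.add (continuous_id.smul continuous_const))).clm_apply
      continuous_const).inner continuous_const

lemma inner_sub_eq_integral_inner_fderiv (hf : ContDiff ℝ 1 f) (u₁ u₂ : F) (w : G) :
    ⟪f u₁ - f u₂, w⟫_ℝ = ∫ t in (0 : ℝ)..1, ⟪fderiv ℝ f (u₂ + t • (u₁ - u₂)) (u₁ - u₂), w⟫_ℝ := by
  have hderiv (t : ℝ) : HasDerivAt (fun s : ℝ => ⟪f (u₂ + s • (u₁ - u₂)), w⟫_ℝ)
      ⟪fderiv ℝ f (u₂ + t • (u₁ - u₂)) (u₁ - u₂), w⟫_ℝ t := by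
    have hline : HasDerivAt (fun s : ℝ => u₂ + s • (u₁ - u₂)) (u₁ - u₂) t := by
      simpa using ((hasDerivAt_id t).smul_const (u₁ - u₂)).const_add u₂
    have hcomp := ((hf.differentiable one_ne_zero _).hasFDerivAt).comp_hasDerivAt t hline
    simpa using hcomp.inner ℝ (hasDerivAt_const t w)
  rw [intervalIntegral.integral_eq_sub_of_hasDerivAt (fun t _ => hderiv t)
    ((continuous_inner_fderiv_add_smul_sub hf u₁ u₂ w).intervalIntegrable 0 1), inner_sub_left]
  simp

end Taylor

lemma inner_sub_ge_of_inner_fderiv_ge {G : Type*} [NormedAddCommGroup G] [InnerProductSpace ℝ G]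
    {f : G → G} {K κ p : ℝ} (hf : ContDiff ℝ 1 f) (hκ : 0 ≤ κ) (hp : 0 ≤ p)
    (hderiv : ∀ u v : G, (-K + κ * ‖u‖ ^ p) * ‖v‖ ^ 2 ≤ ⟪fderiv ℝ f u v, v⟫_ℝ) (u₁ u₂ : G) :
    -K * ‖u₁ - u₂‖ ^ 2 + κ / (8 * 2 ^ p) * (‖u₁‖ ^ p + ‖u₂‖ ^ p) * ‖u₁ - u₂‖ ^ 2 ≤
      ⟪f u₁ - f u₂, u₁ - u₂⟫_ℝ := by
  set g : ℝ → ℝ := fun t => ‖u₂ + t • (u₁ - u₂)‖ ^ p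
  have hg : Continuous g := continuous_rpow_norm_add_smul_sub hp u₁ u₂
  have hmean := rpow_norm_add_div_le_integral_rpow_norm_add_smul_sub hp u₁ u₂
  calc -K * ‖u₁ - u₂‖ ^ 2 + κ / (8 * 2 ^ p) * (‖u₁‖ ^ p + ‖u₂‖ ^ p) * ‖u₁ - u₂‖ ^ 2
      = (-K + κ * ((‖u₁‖ ^ p + ‖u₂‖ ^ p) / (8 * 2 ^ p))) * ‖u₁ - u₂‖ ^ 2 := by ring
    _ ≤ (-K + κ * ∫ t in (0 : ℝ)..1, g t) * ‖u₁ - u₂‖ ^ 2 := by gcongr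
    _ = ∫ t in (0 : ℝ)..1, (-K + κ * g t) * ‖u₁ - u₂‖ ^ 2 := by
        rw [intervalIntegral.integral_mul_const, intervalIntegral.integral_add
          intervalIntegrable_const ((hg.intervalIntegrable 0 1).const_mul κ),
          intervalIntegral.integral_const_mul, intervalIntegral.integral_const]
        simp
    _ ≤ ∫ t in (0 : ℝ)..1, ⟪fderiv ℝ f (u₂ + t • (u₁ - u₂)) (u₁ - u₂), u₁ - u₂⟫_ℝ :=
        intervalIntegral.integral_mono_on zero_le_one
          (((continuous_const.add (hg.const_mul κ)).mul continuous_const).intervalIntegrable 0 1)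
          ((continuous_inner_fderiv_add_smul_sub hf u₁ u₂ _).intervalIntegrable 0 1)
          fun t _ => hderiv _ _
    _ = ⟪f u₁ - f u₂, u₁ - u₂⟫_ℝ := (inner_sub_eq_integral_inner_fderiv hf u₁ u₂ _).symm

theorem stmt2 (f : E → E) (K κ r : ℝ) (hf : ContDiff ℝ 1 f)
    (hK : 0 ≤ K) (hκ : 0 < κ) (hr : 1 ≤ r)
    (hderiv : ∀ u v : E, ⟪(fderiv ℝ f u) v, v⟫_ℝ ≥ (-K + κ * ‖u‖ ^ (r - 1)) * ‖v‖ ^ 2) :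
    ∃ C ≥ (0 : ℝ), ∃ α > (0 : ℝ), ∀ u₁ u₂ : E,
      ⟪f u₁ - f u₂, u₁ - u₂⟫_ℝ ≥
        -C * ‖u₁ - u₂‖ ^ 2 + α * (‖u₁‖ ^ (r - 1) + ‖u₂‖ ^ (r - 1)) * ‖u₁ - u₂‖ ^ 2 :=
  ⟨K, hK, κ / (8 * 2 ^ (r - 1)), by positivity,
    inner_sub_ge_of_inner_fderiv_ge hf hκ.le (by linarith) hderiv⟩
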